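/- arXiv:2011.05371 — 2 statements merged into one kernel-verified Lean document; each statement's English description precedes it below -/
import Mathlib

section
/- Let G be a graph of minimum degree δ and w=(w_0,...,w_l) ∈ ℤ⁺ × ℕ^l with w_0 ≥ w_1 ≥ ... ≥ w_l. Then there exists a w-dominating function on G if and only if w_l ≤ lδ. -/
open scoped Classical
open Finset SimpleGraph

/-- A `w`-dominating function: `f : V → {0,…,l}` with `f(N(v)) ≥ w_{f(v)}` for all `v`. -/
def WDom {V : Type*} [Fintype V] (G : SimpleGraph V) {l : ℕ} (w : Fin (l+1) → ℕ)
    (f : V → Fin (l+1)) : Prop :=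
  ∀ v, w (f v) ≤ ∑ u, if G.Adj v u then (f u : ℕ) else 0

/-- The `w`-domination number. -/
noncomputable def gammaW {V : Type*} [Fintype V] (G : SimpleGraph V) {l : ℕ}
    (w : Fin (l+1) → ℕ) : ℕ :=
  sInf {n | ∃ f : V → Fin (l+1), WDom G w f ∧ ∑ v, (f v : ℕ) = n}

/-- The Italian domination number `γ_I = γ_{(2,0,0)}`. -/
noncomputable def gammaI {V : Type*} [Fintype V] (G : SimpleGraph V) : ℕ :=
  gammaW G ![2,0,0]

/-- The domination number. -/
noncomputable def gamma {V : Type*} [Fintype V] (G : SimpleGraph V) : ℕ :=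
  sInf {n | ∃ S : Finset V, (∀ v, v ∈ S ∨ ∃ u ∈ S, G.Adj u v) ∧ S.card = n}

/-- The total domination number. -/
noncomputable def gammaT {V : Type*} [Fintype V] (G : SimpleGraph V) : ℕ :=
  sInf {n | ∃ S : Finset V, (∀ v, ∃ u ∈ S, G.Adj u v) ∧ S.card = n}

/-- The 2-domination number. -/
noncomputable def gamma2 {V : Type*} [Fintype V] (G : SimpleGraph V) : ℕ :=
  sInf {n | ∃ S : Finset V, (∀ v ∉ S, 2 ≤ (S.filter (fun u => G.Adj u v)).card) ∧ S.card = n}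

/-- The double domination number. -/
noncomputable def gammaX2 {V : Type*} [Fintype V] (G : SimpleGraph V) : ℕ :=
  sInf {n | ∃ S : Finset V, (∀ v, 2 ≤ (S.filter (fun u => u = v ∨ G.Adj u v)).card) ∧ S.card = n}

/-- The double total domination number. -/
noncomputable def gammaX2T {V : Type*} [Fintype V] (G : SimpleGraph V) : ℕ :=
  sInf {n | ∃ S : Finset V, (∀ v, 2 ≤ (S.filter (fun u => G.Adj u v)).card) ∧ S.card = n}

/-- The lexicographic product `G ∘ H`. -/
def lexProd {V W : Type*} (G : SimpleGraph V) (H : SimpleGraph W) : SimpleGraph (V × W) where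
  Adj x y := G.Adj x.1 y.1 ∨ (x.1 = y.1 ∧ H.Adj x.2 y.2)
  symm := by
    constructor
    rintro x y (h | ⟨h1, h2⟩)
    · exact Or.inl h.symm
    · exact Or.inr ⟨h1.symm, h2.symm⟩
  loopless := by
    constructor
    rintro x (h | ⟨_, h⟩)
    · exact G.loopless.irrefl _ h
    · exact H.loopless.irrefl _ h

namespace SimpleGraph

variable {V : Type*} [Fintype V] (G : SimpleGraph V)

lemma sum_ite_adj_const (v : V) (c : ℕ) :
    (∑ u, if G.Adj v u then c else 0) = c * G.degree v := by
  rw [← Finset.sum_filter, Finset.sum_const, smul_eq_mul, mul_comm,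
    ← card_neighborFinset_eq_degree]
  congr 2
  ext u
  simp

lemma sum_ite_adj_fin_le {l : ℕ} (f : V → Fin (l+1)) (v : V) :
    (∑ u, if G.Adj v u then (f u : ℕ) else 0) ≤ l * G.degree v :=
  calc (∑ u, if G.Adj v u then (f u : ℕ) else 0)
      ≤ ∑ u, if G.Adj v u then l else 0 :=
        Finset.sum_le_sum fun u _ => by split <;> omega
    _ = l * G.degree v := G.sum_ite_adj_const v l

lemma wDom_const_last_iff {l : ℕ} (w : Fin (l+1) → ℕ) :
    WDom G w (fun _ => Fin.last l) ↔ ∀ v, w (Fin.last l) ≤ l * G.degree v := by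
  simp only [WDom, Fin.val_last, G.sum_ite_adj_const]

end SimpleGraph

theorem exists_wDom_iff_general {V : Type*} [Fintype V] [Nonempty V] (G : SimpleGraph V)
    {l : ℕ} (w : Fin (l+1) → ℕ) (hw : Antitone w) :
    (∃ f : V → Fin (l+1), WDom G w f) ↔ w (Fin.last l) ≤ l * G.minDegree := by
  constructor
  · rintro ⟨f, hf⟩
    obtain ⟨v, hv⟩ := G.exists_minimal_degree_vertex
    calc w (Fin.last l) ≤ w (f v) := hw (Fin.le_last _)
      _ ≤ ∑ u, if G.Adj v u then (f u : ℕ) else 0 := hf v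
      _ ≤ l * G.minDegree := hv ▸ G.sum_ite_adj_fin_le f v
  · intro h
    exact ⟨_, (G.wDom_const_last_iff w).2 fun v =>
      h.trans (Nat.mul_le_mul_left l (G.minDegree_le_degree v))⟩

theorem exists_wDom_iff {V : Type*} [Fintype V] [Nonempty V] (G : SimpleGraph V)
    {l : ℕ} (w : Fin (l+1) → ℕ) (hw : Antitone w) (h0 : 1 ≤ w 0) :
    (∃ f : V → Fin (l+1), WDom G w f) ↔ w (Fin.last l) ≤ l * G.minDegree :=
  exists_wDom_iff_general G w hw
end

section
/- For a graph G with no isolated vertex, γ_{(2,2,2)}(G) = 3 if and only if γ_{×2,t}(G) = 3. -/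
open scoped Classical
open Finset SimpleGraph

/-! A `(2,2,2)`-dominating function `f` satisfies `2 + f a ≤ ∑ f` for every vertex `a`, since
the open neighbourhood of `a` misses `a`. Hence its weight is at least `3`, and a function of weight
`3` takes only the values `0` and `1`: it is the indicator of a double total dominating set of size
`3`. Conversely the indicator of a double total dominating set is `(2,2,2)`-dominating, and such a
set has at least three vertices, since each of its vertices has two neighbours in it. -/

theorem Nat.sInf_eq_iff_mem {s : Set ℕ} {n : ℕ} (hn : n ≠ 0) (h : ∀ m ∈ s, n ≤ m) :
    sInf s = n ↔ n ∈ s := by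
  refine ⟨fun hs => ?_, fun hs => IsLeast.csInf_eq ⟨hs, h⟩⟩
  have hne : s.Nonempty := Set.nonempty_iff_ne_empty.2 fun he => hn (by simp [← hs, he])
  exact hs ▸ Nat.sInf_mem hne

theorem vec_two_two_two_apply (i : Fin 3) : ![2,2,2] i = 2 := by fin_cases i <;> rfl

section

variable {V : Type*} {G : SimpleGraph V}

def IsDoubleTotalDominating (G : SimpleGraph V) (S : Finset V) : Prop :=
  ∀ v, 2 ≤ #(S.filter (G.Adj · v))

theorem IsDoubleTotalDominating.three_le_card [Nonempty V] {S : Finset V}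
    (hS : IsDoubleTotalDominating G S) : 3 ≤ #S := by
  obtain ⟨u, hu⟩ : S.Nonempty :=
    card_pos.1 (two_pos.trans_le ((hS (Classical.arbitrary V)).trans (card_filter_le _ _)))
  have hsub : S.filter (G.Adj · u) ⊆ S.erase u := fun x hx =>
    mem_erase.2 ⟨(mem_filter.1 hx).2.ne, (mem_filter.1 hx).1⟩
  have := (hS u).trans (card_le_card hsub)
  rw [card_erase_of_mem hu] at this
  omega

noncomputable def finIndicator (S : Finset V) (v : V) : Fin 3 := if v ∈ S then 1 else 0

theorem val_finIndicator (S : Finset V) (v : V) :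
    (finIndicator S v : ℕ) = if v ∈ S then 1 else 0 := by
  unfold finIndicator; split_ifs <;> rfl

variable [Fintype V]

theorem sum_finIndicator (S : Finset V) : ∑ v, (finIndicator S v : ℕ) = #S := by
  simp [val_finIndicator]

theorem wdom_finIndicator_iff (S : Finset V) :
    WDom G ![2,2,2] (finIndicator S) ↔ IsDoubleTotalDominating G S := by
  refine forall_congr' fun v => ?_
  rw [vec_two_two_two_apply]
  simp only [val_finIndicator, ← ite_and, sum_boole, Nat.cast_id]
  congr! 2
  ext u
  simp [G.adj_comm, and_comm]

theorem eq_finIndicator_of_le_one {f : V → Fin 3} (hf : ∀ a, (f a : ℕ) ≤ 1) :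
    f = finIndicator (univ.filter (f · ≠ 0)) := by
  funext a
  refine Fin.ext ?_
  rw [val_finIndicator]
  by_cases h : f a = 0
  · simp [h]
  · have := hf a
    have : (f a : ℕ) ≠ 0 := fun h0 => h (Fin.ext h0)
    rw [if_pos (mem_filter.2 ⟨mem_univ a, h⟩)]
    omega

theorem WDom.weight_add_le_sum {l : ℕ} {w : Fin (l+1) → ℕ} {f : V → Fin (l+1)}
    (hf : WDom G w f) (a : V) : w (f a) + f a ≤ ∑ v, (f v : ℕ) :=
  calc w (f a) + f a
      ≤ ∑ u ∈ univ.filter (G.Adj a), (f u : ℕ) + f a := by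
        rw [sum_filter]; exact Nat.add_le_add_right (hf a) _
    _ ≤ ∑ u ∈ univ.erase a, (f u : ℕ) + f a := by
        gcongr; intro u hu; simpa using (mem_filter.1 hu).2.ne'
    _ = ∑ v, (f v : ℕ) := sum_erase_add _ _ (mem_univ a)

theorem WDom.three_le_sum [Nonempty V] {f : V → Fin 3} (hf : WDom G ![2,2,2] f) :
    3 ≤ ∑ v, (f v : ℕ) := by
  have hbound a := vec_two_two_two_apply (f a) ▸ hf.weight_add_le_sum a
  obtain ⟨a, -, ha⟩ := exists_ne_zero_of_sum_ne_zero
    (by have := hbound (Classical.arbitrary V); omega : ∑ v, (f v : ℕ) ≠ 0)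
  have := hbound a
  omega

theorem WDom.le_one_of_sum_eq_three {f : V → Fin 3} (hf : WDom G ![2,2,2] f)
    (h3 : ∑ v, (f v : ℕ) = 3) (a : V) : (f a : ℕ) ≤ 1 := by
  have := vec_two_two_two_apply (f a) ▸ hf.weight_add_le_sum a
  omega

theorem exists_wdom222_sum_eq_three_iff :
    (∃ f : V → Fin 3, WDom G ![2,2,2] f ∧ ∑ v, (f v : ℕ) = 3) ↔
      ∃ S : Finset V, IsDoubleTotalDominating G S ∧ #S = 3 := by
  constructor
  · rintro ⟨f, hf, h3⟩
    have hf_eq := eq_finIndicator_of_le_one (hf.le_one_of_sum_eq_three h3)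
    rw [hf_eq] at hf h3
    exact ⟨_, (wdom_finIndicator_iff _).1 hf, (sum_finIndicator _).symm.trans h3⟩
  · rintro ⟨S, hS, h3⟩
    exact ⟨finIndicator S, (wdom_finIndicator_iff S).2 hS, (sum_finIndicator S).trans h3⟩

end

theorem gammaW222_eq_three_iff_general {V : Type*} [Fintype V] (G : SimpleGraph V) :
    gammaW G ![2,2,2] = 3 ↔ gammaX2T G = 3 := by
  cases isEmpty_or_nonempty V
  · have hW : gammaW G ![2,2,2] = 0 :=
      Nat.sInf_eq_zero.2 (Or.inl ⟨isEmptyElim, isEmptyElim, by simp⟩)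
    have hX : gammaX2T G = 0 := Nat.sInf_eq_zero.2 (Or.inl ⟨∅, isEmptyElim, rfl⟩)
    simp [hW, hX]
  rw [gammaW, gammaX2T, Nat.sInf_eq_iff_mem three_ne_zero, Nat.sInf_eq_iff_mem three_ne_zero]
  · exact exists_wdom222_sum_eq_three_iff
  · rintro _ ⟨S, hS, rfl⟩
    exact IsDoubleTotalDominating.three_le_card hS
  · rintro _ ⟨f, hf, rfl⟩
    exact hf.three_le_sum

theorem gammaW222_eq_three_iff {V : Type*} [Fintype V] (G : SimpleGraph V)
    (hG : ∀ v, ∃ u, G.Adj v u) :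
    gammaW G ![2,2,2] = 3 ↔ gammaX2T G = 3 :=
  gammaW222_eq_three_iff_general G
end
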